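/- arXiv:2503.04447 — 5 statements merged into one kernel-verified Lean document; each statement's English description precedes it below -/
import Mathlib

section
/- Let A be a nonnegative symmetric n×n real matrix, let J ⊆ supp(A) be a symmetric label set with A_{ij} > 0 for all (i,j) ∈ J, let p ≥ 1 define Ā by Ā_{ij} = p·A_{ij} if (i,j) ∈ J and Ā_{ij} = A_{ij} otherwise, and let β > 0. If (Z*, H*) is a global minimizer of problem (CP), then (⌈Z*⌉, H*) is a global minimizer of problem (MIP), where ⌈Z*⌉ denotes the entrywise ceiling of Z*. -/
open Matrix BigOperators

/-- The graph Laplacian of a matrix: `L(M) = Diag(M e) - M`. -/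
noncomputable def Lap {n : ℕ} (M : Matrix (Fin n) (Fin n) ℝ) : Matrix (Fin n) (Fin n) ℝ :=
  Matrix.diagonal (fun i => ∑ j, M i j) - M

/-- The objective `f(Z, H) = tr(Hᵀ L(A ∘ Z) H) - β tr(Ā Z)`. -/
noncomputable def fobj {n d : ℕ} (A Abar : Matrix (Fin n) (Fin n) ℝ) (β : ℝ)
    (Z : Matrix (Fin n) (Fin n) ℝ) (H : Matrix (Fin n) (Fin d) ℝ) : ℝ :=
  Matrix.trace (Hᵀ * Lap (Matrix.hadamard A Z) * H) - β * Matrix.trace (Abar * Z)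

/-- Feasibility for problem (CP): `Z ∈ Sⁿ_A ∩ [0,1]^{n×n}` and `Hᵀ H = I_d`. -/
def feasCP {n d : ℕ} (A : Matrix (Fin n) (Fin n) ℝ)
    (Z : Matrix (Fin n) (Fin n) ℝ) (H : Matrix (Fin n) (Fin d) ℝ) : Prop :=
  Zᵀ = Z ∧ (∀ i j, Z i j ≠ 0 → A i j ≠ 0) ∧ (∀ i j, 0 ≤ Z i j ∧ Z i j ≤ 1) ∧ Hᵀ * H = 1

/-- Feasibility for problem (MIP): `Z ∈ Sⁿ_A ∩ {0,1}^{n×n}` and `Hᵀ H = I_d`. -/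
def feasMIP {n d : ℕ} (A : Matrix (Fin n) (Fin n) ℝ)
    (Z : Matrix (Fin n) (Fin n) ℝ) (H : Matrix (Fin n) (Fin d) ℝ) : Prop :=
  Zᵀ = Z ∧ (∀ i j, Z i j ≠ 0 → A i j ≠ 0) ∧ (∀ i j, Z i j = 0 ∨ Z i j = 1) ∧ Hᵀ * H = 1

lemma tr_quad {n d : ℕ} (M : Matrix (Fin n) (Fin n) ℝ) (H : Matrix (Fin n) (Fin d) ℝ) :
    Matrix.trace (Hᵀ * M * H) = ∑ i, ∑ j, M i j * ∑ k, H i k * H j k := by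
  simp only [Matrix.trace, Matrix.diag, Matrix.mul_apply, Matrix.transpose_apply,
    Finset.sum_mul, Finset.mul_sum]
  refine Eq.trans (Finset.sum_congr rfl fun k _ => Finset.sum_comm) ?_
  rw [Finset.sum_comm]
  refine Finset.sum_congr rfl fun i _ => ?_
  rw [Finset.sum_comm]
  exact Finset.sum_congr rfl fun j _ => Finset.sum_congr rfl fun k _ => by ring

lemma tr_lin {n : ℕ} (Abar Z : Matrix (Fin n) (Fin n) ℝ) :
    Matrix.trace (Abar * Z) = ∑ i, ∑ j, Z i j * Abar j i := by
  simp only [Matrix.trace, Matrix.diag, Matrix.mul_apply]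
  rw [Finset.sum_comm]
  exact Finset.sum_congr rfl fun i _ => Finset.sum_congr rfl fun j _ => mul_comm _ _

noncomputable def coef {n d : ℕ} (A Abar : Matrix (Fin n) (Fin n) ℝ) (β : ℝ)
    (H : Matrix (Fin n) (Fin d) ℝ) : Matrix (Fin n) (Fin n) ℝ :=
  Matrix.of fun i j =>
    A i j * ((∑ k, H i k * H i k) - ∑ k, H i k * H j k) - β * Abar j i

lemma fobj_eq {n d : ℕ} (A Abar : Matrix (Fin n) (Fin n) ℝ) (β : ℝ)
    (Z : Matrix (Fin n) (Fin n) ℝ) (H : Matrix (Fin n) (Fin d) ℝ) :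
    fobj A Abar β Z H = ∑ i, ∑ j, Z i j * coef A Abar β H i j := by
  have hlap : ∀ i j, Lap (Matrix.hadamard A Z) i j
      = (if i = j then ∑ l, A i l * Z i l else 0) - A i j * Z i j := by
    intro i j
    simp [Lap, Matrix.diagonal_apply, Matrix.hadamard, eq_comm]
  simp only [fobj]
  rw [tr_quad, tr_lin]
  simp only [hlap, sub_mul, ite_mul, zero_mul, Finset.sum_sub_distrib,
    Finset.sum_ite_eq, Finset.mem_univ, if_true]
  rw [Finset.mul_sum, ← Finset.sum_sub_distrib, ← Finset.sum_sub_distrib]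
  refine Finset.sum_congr rfl fun i _ => ?_
  rw [Finset.sum_mul, Finset.mul_sum, ← Finset.sum_sub_distrib, ← Finset.sum_sub_distrib]
  exact Finset.sum_congr rfl fun j _ => by simp only [coef, Matrix.of_apply]; ring

lemma sum_single {n : ℕ} (c : Matrix (Fin n) (Fin n) ℝ) (i j : Fin n) :
    (∑ a : Fin n, ∑ b : Fin n, if a = i ∧ b = j then c a b else 0) = c i j := by
  rw [Fintype.sum_eq_single i fun x hx => Finset.sum_eq_zero fun y _ => by simp [hx]]
  rw [Fintype.sum_eq_single j fun y hy => by simp [hy]]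
  simp

/-- If `Zs` is a CP minimizer and `0 < Zs i j < 1`, the symmetric pair slope vanishes. -/
lemma slope_zero {n d : ℕ} (A Abar : Matrix (Fin n) (Fin n) ℝ) (hAsym : Aᵀ = A) (β : ℝ)
    (Zs : Matrix (Fin n) (Fin n) ℝ) (Hs : Matrix (Fin n) (Fin d) ℝ)
    (hfeas : feasCP A Zs Hs)
    (hmin : ∀ (Z : Matrix (Fin n) (Fin n) ℝ) (H : Matrix (Fin n) (Fin d) ℝ),
      feasCP A Z H → fobj A Abar β Zs Hs ≤ fobj A Abar β Z H)
    (i j : Fin n) (hz0 : 0 < Zs i j) (hz1 : Zs i j < 1) :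
    coef A Abar β Hs i j + coef A Abar β Hs j i = 0 := by
  obtain ⟨hZsym, hZsupp, hZbox, hHorth⟩ := hfeas
  set c : Matrix (Fin n) (Fin n) ℝ := coef A Abar β Hs with hc
  have hAij : A i j ≠ 0 := hZsupp i j (ne_of_gt hz0)
  have hZji : Zs j i = Zs i j := congrFun (congrFun hZsym i) j
  have hAji : A j i = A i j := congrFun (congrFun hAsym i) j
  set P : Matrix (Fin n) (Fin n) ℝ :=
    Matrix.of (fun a b => if (a = i ∧ b = j) ∨ (a = j ∧ b = i) then (1:ℝ) else 0) with hP
  have hPsym : ∀ a b, P b a = P a b := by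
    intro a b
    simp only [hP, Matrix.of_apply]
    exact if_congr (by tauto) rfl rfl
  have hPval : ∀ a b, ((a = i ∧ b = j) ∨ (a = j ∧ b = i)) → Zs a b = Zs i j ∧ A a b ≠ 0 := by
    rintro a b (⟨ha, hb⟩ | ⟨ha, hb⟩) <;> subst ha <;> subst hb
    · exact ⟨rfl, hAij⟩
    · exact ⟨hZji, by rw [hAji]; exact hAij⟩
  have hfeas_t : ∀ t : ℝ, 0 ≤ Zs i j + t → Zs i j + t ≤ 1 → feasCP A (Zs + t • P) Hs := by
    intro t h0 h1
    refine ⟨?_, ?_, ?_, hHorth⟩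
    · ext a b
      simp only [Matrix.transpose_apply, Matrix.add_apply, Matrix.smul_apply, smul_eq_mul]
      rw [show Zs b a = Zs a b from congrFun (congrFun hZsym a) b, hPsym]
    · intro a b hab
      by_cases hcond : (a = i ∧ b = j) ∨ (a = j ∧ b = i)
      · exact (hPval a b hcond).2
      · have hP0 : P a b = 0 := by simp [hP, hcond]
        apply hZsupp a b
        simpa [Matrix.add_apply, hP0] using hab
    · intro a b
      by_cases hcond : (a = i ∧ b = j) ∨ (a = j ∧ b = i)
      · have hP1 : P a b = 1 := by simp [hP, hcond]
        simp only [Matrix.add_apply, Matrix.smul_apply, smul_eq_mul, hP1, mul_one,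
          (hPval a b hcond).1]
        constructor <;> linarith
      · have hP0 : P a b = 0 := by simp [hP, hcond]
        simp only [Matrix.add_apply, Matrix.smul_apply, smul_eq_mul, hP0, mul_zero, add_zero]
        exact hZbox a b
  set s : ℝ := ∑ a, ∑ b, P a b * c a b with hs_def
  have hval : ∀ t : ℝ, fobj A Abar β (Zs + t • P) Hs = fobj A Abar β Zs Hs + t * s := by
    intro t
    simp only [fobj_eq, hs_def, ← hc, Matrix.add_apply, Matrix.smul_apply, smul_eq_mul,
      add_mul, Finset.sum_add_distrib, Finset.mul_sum, mul_assoc]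
  have h1 := hmin _ _ (hfeas_t (-(Zs i j)) (by linarith) (by linarith))
  rw [hval] at h1
  have h2 := hmin _ _ (hfeas_t (1 - Zs i j) (by linarith) (by linarith))
  rw [hval] at h2
  have hs1 : s ≤ 0 := by nlinarith
  have hs2 : 0 ≤ s := by nlinarith
  have hs : s = 0 := le_antisymm hs1 hs2
  by_cases hij : i = j
  · subst hij
    have : s = c i i := by
      simp only [hs_def, hP, Matrix.of_apply, or_self, ite_mul, one_mul, zero_mul]
      exact sum_single c i i
    rw [this] at hs
    rw [hs]; ring
  · have split : ∀ a b : Fin n, P a b * c a b =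
        (if a = i ∧ b = j then c a b else 0) + (if a = j ∧ b = i then c a b else 0) := by
      intro a b
      simp only [hP, Matrix.of_apply]
      by_cases h1' : a = i ∧ b = j <;> by_cases h2' : a = j ∧ b = i
      · exact absurd (h1'.1.symm.trans h2'.1) hij
      · simp [h1'.1, h1'.2, hij]
      · simp [h2'.1, h2'.2, show ¬ j = i from fun h => hij h.symm]
      · simp [h1', h2']
    have : s = c i j + c j i := by
      rw [hs_def]
      simp only [split, Finset.sum_add_distrib]
      rw [sum_single, sum_single]
    rw [← this, hs]

theorem stmt7 {n d : ℕ} (A Abar : Matrix (Fin n) (Fin n) ℝ)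
    (hAsym : Aᵀ = A) (hAnn : ∀ i j, 0 ≤ A i j)
    (J : Set (Fin n × Fin n))
    (hJsym : ∀ i j, (i, j) ∈ J ↔ (j, i) ∈ J)
    (hJpos : ∀ i j, (i, j) ∈ J → 0 < A i j)
    (p : ℝ) (hp : 1 ≤ p)
    (hAbar : ∀ i j, ((i, j) ∈ J → Abar i j = p * A i j) ∧ ((i, j) ∉ J → Abar i j = A i j))
    (β : ℝ) (hβ : 0 < β)
    (Zs : Matrix (Fin n) (Fin n) ℝ) (Hs : Matrix (Fin n) (Fin d) ℝ)
    (hfeas : feasCP A Zs Hs)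
    (hmin : ∀ (Z : Matrix (Fin n) (Fin n) ℝ) (H : Matrix (Fin n) (Fin d) ℝ),
      feasCP A Z H → fobj A Abar β Zs Hs ≤ fobj A Abar β Z H) :
    feasMIP A (Matrix.of fun i j => (⌈Zs i j⌉ : ℝ)) Hs ∧
    ∀ (Z : Matrix (Fin n) (Fin n) ℝ) (H : Matrix (Fin n) (Fin d) ℝ), feasMIP A Z H →
      fobj A Abar β (Matrix.of fun i j => (⌈Zs i j⌉ : ℝ)) Hs ≤ fobj A Abar β Z H := by
  obtain ⟨hZsym, hZsupp, hZbox, hHorth⟩ := hfeas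
  set c : Matrix (Fin n) (Fin n) ℝ := coef A Abar β Hs with hc
  -- ceiling facts
  have hceil0 : ∀ i j, Zs i j = 0 → (⌈Zs i j⌉ : ℝ) = 0 := by
    intro i j h; rw [h]; simp
  have hceil1 : ∀ i j, 0 < Zs i j → (⌈Zs i j⌉ : ℝ) = 1 := by
    intro i j h
    have : ⌈Zs i j⌉ = 1 :=
      Int.ceil_eq_iff.mpr ⟨by push_cast; linarith, by push_cast; exact (hZbox i j).2⟩
    rw [this]; norm_num
  -- feasMIP of the rounded matrix
  have hMIP : feasMIP A (Matrix.of fun i j => (⌈Zs i j⌉ : ℝ)) Hs := by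
    refine ⟨?_, ?_, ?_, hHorth⟩
    · ext i j
      simp only [Matrix.transpose_apply, Matrix.of_apply]
      rw [show Zs j i = Zs i j from congrFun (congrFun hZsym i) j]
    · intro i j h
      apply hZsupp i j
      intro h0
      exact h (by simp only [Matrix.of_apply]; exact hceil0 i j h0)
    · intro i j
      rcases eq_or_lt_of_le (hZbox i j).1 with h | h
      · left; simp only [Matrix.of_apply]; exact hceil0 i j h.symm
      · right; simp only [Matrix.of_apply]; exact hceil1 i j h
  refine ⟨hMIP, fun Z H hZH => ?_⟩
  -- value equality
  have hkey : fobj A Abar β (Matrix.of fun i j => (⌈Zs i j⌉ : ℝ)) Hs = fobj A Abar β Zs Hs := by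
    rw [fobj_eq, fobj_eq]
    have hdiff : ∀ i j : Fin n,
        ((⌈Zs i j⌉ : ℝ) - Zs i j) * (c i j + c j i) = 0 := by
      intro i j
      rcases eq_or_lt_of_le (hZbox i j).1 with h | h
      · rw [hceil0 i j h.symm, ← h]; ring
      · rcases eq_or_lt_of_le (hZbox i j).2 with h1 | h1
        · rw [hceil1 i j h, h1]; ring
        · rw [slope_zero A Abar hAsym β Zs Hs ⟨hZsym, hZsupp, hZbox, hHorth⟩ hmin i j h h1]
          ring
    have hsymE : ∀ i j : Fin n, (⌈Zs j i⌉ : ℝ) - Zs j i = (⌈Zs i j⌉ : ℝ) - Zs i j := by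
      intro i j
      rw [show Zs j i = Zs i j from congrFun (congrFun hZsym i) j]
    have hswap : ∑ i, ∑ j, ((⌈Zs i j⌉ : ℝ) - Zs i j) * c j i
        = ∑ i, ∑ j, ((⌈Zs i j⌉ : ℝ) - Zs i j) * c i j := by
      rw [Finset.sum_comm]
      exact Finset.sum_congr rfl fun i _ => Finset.sum_congr rfl fun j _ => by
        rw [hsymE i j]
    have hz : ∑ i, ∑ j, ((⌈Zs i j⌉ : ℝ) - Zs i j) * c i j = 0 := by
      have h2 : (2 : ℝ) * ∑ i, ∑ j, ((⌈Zs i j⌉ : ℝ) - Zs i j) * c i j = 0 := by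
        have := Finset.sum_eq_zero (s := (Finset.univ : Finset (Fin n)))
          (fun i _ => Finset.sum_eq_zero (fun j (_ : j ∈ Finset.univ) => hdiff i j))
        calc (2 : ℝ) * ∑ i, ∑ j, ((⌈Zs i j⌉ : ℝ) - Zs i j) * c i j
            = (∑ i, ∑ j, ((⌈Zs i j⌉ : ℝ) - Zs i j) * c i j)
              + ∑ i, ∑ j, ((⌈Zs i j⌉ : ℝ) - Zs i j) * c j i := by rw [hswap]; ring
          _ = ∑ i, ∑ j, ((⌈Zs i j⌉ : ℝ) - Zs i j) * (c i j + c j i) := by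
              rw [← Finset.sum_add_distrib]
              refine Finset.sum_congr rfl fun i _ => ?_
              rw [← Finset.sum_add_distrib]
              exact Finset.sum_congr rfl fun j _ => by ring
          _ = 0 := this
      linarith
    have : ∑ i, ∑ j, ((Matrix.of fun i j => (⌈Zs i j⌉ : ℝ)) i j) * c i j
        - ∑ i, ∑ j, Zs i j * c i j = 0 := by
      rw [← Finset.sum_sub_distrib]
      rw [show (0:ℝ) = ∑ i, ∑ j, ((⌈Zs i j⌉ : ℝ) - Zs i j) * c i j from hz.symm]
      refine Finset.sum_congr rfl fun i _ => ?_
      rw [← Finset.sum_sub_distrib]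
      exact Finset.sum_congr rfl fun j _ => by simp only [Matrix.of_apply]; ring
    linarith
  rw [hkey]
  obtain ⟨hs, hsu, hb, ho⟩ := hZH
  exact hmin Z H ⟨hs, hsu, fun i j => by rcases hb i j with h | h <;> rw [h] <;> norm_num, ho⟩
end

section
/- Let A be a nonnegative symmetric n×n real matrix, let J ⊆ supp(A) be a symmetric label set with A_{ij} > 0 for all (i,j) ∈ J, let p ≥ 1 define Ā by Ā_{ij} = p·A_{ij} if (i,j) ∈ J and Ā_{ij} = A_{ij} otherwise, let β > 0, and suppose d ≥ n − rank(L(A)). Then every global minimizer (Z*, H*) of problem (CP) satisfies exactly one of the following: (a) rank(L(A ∘ Z*)) > n − d; (b) rank(L(A ∘ Z*)) = n − d and Z* ∈ {0,1}^{n×n}. -/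
open Matrix BigOperators

section Aux

lemma lap_mulVec {n : ℕ} (W : Matrix (Fin n) (Fin n) ℝ) (x : Fin n → ℝ) (k : Fin n) :
    (Lap W).mulVec x k = ∑ l, W k l * (x k - x l) := by
  simp only [Lap, mulVec, dotProduct, Matrix.sub_apply, diagonal, of_apply, sub_mul, ite_mul, zero_mul,
    Finset.sum_sub_distrib, Finset.sum_ite_eq, Finset.mem_univ, if_true, mul_sub]
  rw [Finset.sum_mul]

lemma lap_qform {n : ℕ} (W : Matrix (Fin n) (Fin n) ℝ) (hW : Wᵀ = W) (x : Fin n → ℝ) :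
    x ⬝ᵥ (Lap W).mulVec x = (∑ k, ∑ l, W k l * (x k - x l)^2) / 2 := by
  have hsym : ∀ k l, W l k = W k l := fun k l => by conv_lhs => rw [← hW, transpose_apply]
  have h1 : x ⬝ᵥ (Lap W).mulVec x = ∑ k, ∑ l, W k l * (x k^2 - x k * x l) := by
    simp only [dotProduct, lap_mulVec, Finset.mul_sum]
    exact Finset.sum_congr rfl fun k _ => Finset.sum_congr rfl fun l _ => by ring
  have h3 : ∑ k, ∑ l, W k l * (x k - x l)^2
      = ∑ k, ∑ l, (W k l * (x k^2 - x k * x l) + W k l * (x l^2 - x k * x l)) := by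
    exact Finset.sum_congr rfl fun k _ => Finset.sum_congr rfl fun l _ => by ring
  have h4 : ∑ k, ∑ l, W k l * (x l^2 - x k * x l) = ∑ k, ∑ l, W k l * (x k^2 - x k * x l) := by
    rw [Finset.sum_comm]
    exact Finset.sum_congr rfl fun k _ => Finset.sum_congr rfl fun l _ => by
      rw [hsym]; ring
  rw [h1, h3]
  simp only [Finset.sum_add_distrib]
  rw [h4]
  ring

lemma trace_form {n d : ℕ} (M : Matrix (Fin n) (Fin n) ℝ) (H : Matrix (Fin n) (Fin d) ℝ) :
    Matrix.trace (Hᵀ * M * H) = ∑ c, (fun k => H k c) ⬝ᵥ M.mulVec (fun k => H k c) := by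
  rw [Matrix.trace]
  refine Finset.sum_congr rfl fun c _ => ?_
  simp only [Matrix.diag_apply, Matrix.mul_apply, transpose_apply, dotProduct, mulVec,
    Finset.sum_mul, Finset.mul_sum]
  rw [Finset.sum_comm]
  exact Finset.sum_congr rfl fun k _ => Finset.sum_congr rfl fun l _ => by ring

lemma trace_lap {n d : ℕ} (W : Matrix (Fin n) (Fin n) ℝ) (hW : Wᵀ = W)
    (H : Matrix (Fin n) (Fin d) ℝ) :
    Matrix.trace (Hᵀ * Lap W * H)
      = (∑ k, ∑ l, W k l * (∑ c, (H k c - H l c)^2)) / 2 := by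
  rw [trace_form]
  simp only [lap_qform W hW]
  rw [← Finset.sum_div]
  congr 1
  rw [Finset.sum_comm]
  exact Finset.sum_congr rfl fun k _ => by
    rw [Finset.sum_comm]
    exact Finset.sum_congr rfl fun l _ => by rw [Finset.mul_sum]

lemma trace_lap_nonneg {n d : ℕ} (W : Matrix (Fin n) (Fin n) ℝ) (hW : Wᵀ = W)
    (hWnn : ∀ k l, 0 ≤ W k l) (H : Matrix (Fin n) (Fin d) ℝ) :
    0 ≤ Matrix.trace (Hᵀ * Lap W * H) := by
  rw [trace_lap W hW]
  apply div_nonneg _ (by norm_num)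
  exact Finset.sum_nonneg fun k _ => Finset.sum_nonneg fun l _ =>
    mul_nonneg (hWnn k l) (Finset.sum_nonneg fun c _ => sq_nonneg _)

lemma mem_ker_lap {n : ℕ} (W : Matrix (Fin n) (Fin n) ℝ) (x : Fin n → ℝ)
    (h : ∀ k l, W k l ≠ 0 → x k = x l) : (Lap W).mulVec x = 0 := by
  funext k
  rw [lap_mulVec]
  simp only [Pi.zero_apply]
  apply Finset.sum_eq_zero
  intro l _
  by_cases hw : W k l = 0
  · rw [hw, zero_mul]
  · rw [h k l hw, sub_self, mul_zero]

lemma ker_lap_eq {n : ℕ} (W : Matrix (Fin n) (Fin n) ℝ) (hW : Wᵀ = W)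
    (hWnn : ∀ k l, 0 ≤ W k l) (x : Fin n → ℝ) (hx : (Lap W).mulVec x = 0) :
    ∀ k l, W k l ≠ 0 → x k = x l := by
  intro k l hkl
  have hq : (∑ k, ∑ l, W k l * (x k - x l)^2) / 2 = 0 := by
    rw [← lap_qform W hW, hx, dotProduct_zero]
  have hq2 : ∑ k, ∑ l, W k l * (x k - x l)^2 = 0 := by linarith
  have h1 : ∀ k ∈ Finset.univ, (0:ℝ) ≤ ∑ l, W k l * (x k - x l)^2 :=
    fun k _ => Finset.sum_nonneg fun l _ => mul_nonneg (hWnn k l) (sq_nonneg _)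
  have h2 := (Finset.sum_eq_zero_iff_of_nonneg h1).mp hq2 k (Finset.mem_univ k)
  have h3 := (Finset.sum_eq_zero_iff_of_nonneg
    (fun l _ => mul_nonneg (hWnn k l) (sq_nonneg _))).mp h2 l (Finset.mem_univ l)
  have h5 : (x k - x l)^2 = 0 := by
    rcases mul_eq_zero.mp h3 with h | h
    · exact absurd h hkl
    · exact h
  have := pow_eq_zero_iff (n := 2) (by norm_num) |>.mp h5
  linarith

lemma exists_ortho {n d : ℕ} (K : Submodule ℝ (Fin n → ℝ))
    (hK : d ≤ Module.finrank ℝ K) :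
    ∃ H : Matrix (Fin n) (Fin d) ℝ, Hᵀ * H = 1 ∧ ∀ c, (fun k => H k c) ∈ K := by
  let e : EuclideanSpace ℝ (Fin n) ≃ₗ[ℝ] (Fin n → ℝ) :=
    (WithLp.linearEquiv 2 ℝ (Fin n → ℝ))
  let K' : Submodule ℝ (EuclideanSpace ℝ (Fin n)) := K.map (e.symm : (Fin n → ℝ) →ₗ[ℝ] _)
  have hfr : Module.finrank ℝ K' = Module.finrank ℝ K := LinearEquiv.finrank_map_eq e.symm K
  have hK' : d ≤ Module.finrank ℝ K' := by rw [hfr]; exact hK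
  let b := stdOrthonormalBasis ℝ K'
  let v : Fin d → EuclideanSpace ℝ (Fin n) :=
    fun c => (b (Fin.castLE hK' c) : EuclideanSpace ℝ (Fin n))
  refine ⟨Matrix.of (fun k c => v c k), ?_, ?_⟩
  · ext c c'
    have horth := b.orthonormal
    rw [orthonormal_iff_ite] at horth
    have h1 : (inner ℝ (v c) (v c') : ℝ) = if c = c' then 1 else 0 := by
      have := horth (Fin.castLE hK' c) (Fin.castLE hK' c')
      rw [Submodule.coe_inner] at this
      rw [show (inner ℝ (v c) (v c') : ℝ)
        = (inner ℝ (b (Fin.castLE hK' c) : EuclideanSpace ℝ (Fin n))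
            (b (Fin.castLE hK' c') : EuclideanSpace ℝ (Fin n)) : ℝ) from rfl]
      rw [this]
      congr 1
      simp [Fin.castLE, Fin.ext_iff]
    have h2 : (inner ℝ (v c) (v c') : ℝ) = ∑ k, v c k * v c' k := by
      simp [PiLp.inner_apply, RCLike.inner_apply, starRingEnd_apply]
      exact Finset.sum_congr rfl fun _ _ => mul_comm _ _
    rw [Matrix.mul_apply]
    simp only [transpose_apply, of_apply, Matrix.one_apply]
    rw [← h2, h1]
  · intro c
    have hmem : v c ∈ K' := (b (Fin.castLE hK' c)).2
    obtain ⟨y, hy, hey⟩ := hmem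
    have : (fun k => (Matrix.of (fun k c => v c k)) k c) = e (v c) := rfl
    rw [this, ← hey]
    simpa using hy

lemma rank_add_ker {n : ℕ} (M : Matrix (Fin n) (Fin n) ℝ) :
    M.rank + Module.finrank ℝ (LinearMap.ker M.mulVecLin) = n := by
  rw [Matrix.rank]
  rw [LinearMap.finrank_range_add_finrank_ker]
  simp [Module.finrank_pi]

lemma trace_mul_eq {n : ℕ} (M N : Matrix (Fin n) (Fin n) ℝ) :
    Matrix.trace (M * N) = ∑ k, ∑ l, M k l * N l k := by
  simp [Matrix.trace, Matrix.mul_apply, Matrix.diag]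

lemma trace_update {n : ℕ} (Abar Zs : Matrix (Fin n) (Fin n) ℝ) (i j : Fin n)
    (hz : Zs j i = Zs i j) :
    Matrix.trace (Abar * Matrix.of (fun k l =>
        if (k = i ∧ l = j) ∨ (k = j ∧ l = i) then 1 else Zs k l))
      = Matrix.trace (Abar * Zs)
        + (if i = j then Abar i j * (1 - Zs i j)
           else Abar j i * (1 - Zs i j) + Abar i j * (1 - Zs i j)) := by
  rw [trace_mul_eq, trace_mul_eq]
  rw [← sub_eq_iff_eq_add']
  rw [← Finset.sum_sub_distrib]
  simp only [← Finset.sum_sub_distrib, ← mul_sub]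
  by_cases hij : i = j
  · subst hij
    have key : ∀ k l : Fin n, Abar k l *
        ((if (l = i ∧ k = i) ∨ (l = i ∧ k = i) then (1:ℝ) else Zs l k) - Zs l k)
        = if k = i then (if l = i then Abar i i * (1 - Zs i i) else 0) else 0 := by
      intro k l
      by_cases hk : k = i <;> by_cases hl : l = i <;> simp [hk, hl]
    simp only [of_apply, key]
    simp
  · have key : ∀ k l : Fin n, Abar k l *
        ((if (l = i ∧ k = j) ∨ (l = j ∧ k = i) then (1:ℝ) else Zs l k) - Zs l k)
        = (if k = j then (if l = i then Abar j i * (1 - Zs i j) else 0) else 0)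
          + (if k = i then (if l = j then Abar i j * (1 - Zs i j) else 0) else 0) := by
      intro k l
      by_cases hk1 : k = j <;> by_cases hk2 : k = i <;> by_cases hl1 : l = i
        <;> by_cases hl2 : l = j <;> simp_all
    simp only [of_apply, key]
    simp only [Finset.sum_add_distrib]
    simp [hij]

lemma lap_mul_eq_zero {n d : ℕ} (W : Matrix (Fin n) (Fin n) ℝ) (H : Matrix (Fin n) (Fin d) ℝ)
    (h : ∀ c, (fun k => H k c) ∈ LinearMap.ker (Lap W).mulVecLin) :
    Matrix.trace (Hᵀ * Lap W * H) = 0 := by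
  rw [trace_form]
  apply Finset.sum_eq_zero
  intro c _
  have := h c
  rw [LinearMap.mem_ker, Matrix.mulVecLin_apply] at this
  rw [this, dotProduct_zero]

end Aux

lemma feas_update {n d : ℕ} (A Zs : Matrix (Fin n) (Fin n) ℝ)
    (hAsym : Aᵀ = A) (hZsym : Zsᵀ = Zs)
    (hsupp : ∀ i j, Zs i j ≠ 0 → A i j ≠ 0) (hbox : ∀ i j, 0 ≤ Zs i j ∧ Zs i j ≤ 1)
    (i j : Fin n) (hAij : A i j ≠ 0)
    (H : Matrix (Fin n) (Fin d) ℝ) (hH : Hᵀ * H = 1) :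
    feasCP A (Matrix.of fun k l => if (k = i ∧ l = j) ∨ (k = j ∧ l = i) then 1 else Zs k l) H := by
  have hAs : ∀ k l, A l k = A k l := fun k l => by conv_lhs => rw [← hAsym, transpose_apply]
  refine ⟨?_, ?_, ?_, hH⟩
  · ext k l
    simp only [transpose_apply, of_apply]
    have hC : ((l = i ∧ k = j) ∨ (l = j ∧ k = i)) ↔ ((k = i ∧ l = j) ∨ (k = j ∧ l = i)) := by
      tauto
    have hZ : Zs l k = Zs k l := by conv_lhs => rw [← hZsym, transpose_apply]
    rw [if_congr hC rfl hZ]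
  · intro k l hz
    simp only [of_apply] at hz
    by_cases hc : (k = i ∧ l = j) ∨ (k = j ∧ l = i)
    · rcases hc with ⟨hk, hl⟩ | ⟨hk, hl⟩
      · rw [hk, hl]; exact hAij
      · rw [hk, hl, hAs]; exact hAij
    · rw [if_neg hc] at hz
      exact hsupp k l hz
  · intro k l
    simp only [of_apply]
    by_cases hc : (k = i ∧ l = j) ∨ (k = j ∧ l = i)
    · rw [if_pos hc]; norm_num
    · rw [if_neg hc]; exact hbox k l

theorem stmt9 {n d : ℕ} (A Abar : Matrix (Fin n) (Fin n) ℝ)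
    (hAsym : Aᵀ = A) (hAnn : ∀ i j, 0 ≤ A i j)
    (J : Set (Fin n × Fin n))
    (hJsym : ∀ i j, (i, j) ∈ J ↔ (j, i) ∈ J)
    (hJpos : ∀ i j, (i, j) ∈ J → 0 < A i j)
    (p : ℝ) (hp : 1 ≤ p)
    (hAbar : ∀ i j, ((i, j) ∈ J → Abar i j = p * A i j) ∧ ((i, j) ∉ J → Abar i j = A i j))
    (β : ℝ) (hβ : 0 < β)
    (hd : (n : ℤ) - (Lap A).rank ≤ (d : ℤ))
    (Zs : Matrix (Fin n) (Fin n) ℝ) (Hs : Matrix (Fin n) (Fin d) ℝ)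
    (hfeas : feasCP A Zs Hs)
    (hmin : ∀ (Z : Matrix (Fin n) (Fin n) ℝ) (H : Matrix (Fin n) (Fin d) ℝ),
      feasCP A Z H → fobj A Abar β Zs Hs ≤ fobj A Abar β Z H) :
    Xor' ((n : ℤ) - (d : ℤ) < ((Lap (Matrix.hadamard A Zs)).rank : ℤ))
      ((((Lap (Matrix.hadamard A Zs)).rank : ℤ) = (n : ℤ) - (d : ℤ)) ∧
        ∀ i j, Zs i j = 0 ∨ Zs i j = 1) := by
  obtain ⟨hZsym, hsupp, hbox, hH⟩ := hfeas
  set W := Matrix.hadamard A Zs with hWdef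
  have hAs : ∀ k l, A l k = A k l := fun k l => by conv_lhs => rw [← hAsym, transpose_apply]
  have hZs : ∀ k l, Zs l k = Zs k l := fun k l => by conv_lhs => rw [← hZsym, transpose_apply]
  have hWsym : Wᵀ = W := by
    ext k l; simp only [transpose_apply, hWdef, hadamard_apply]; rw [hAs, hZs]
  have hWnn : ∀ k l, 0 ≤ W k l := fun k l =>
    mul_nonneg (hAnn k l) (hbox k l).1
  have hAbarpos : ∀ k l, A k l ≠ 0 → 0 < Abar k l := by
    intro k l hA
    have hApos : 0 < A k l := lt_of_le_of_ne (hAnn k l) (Ne.symm hA)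
    by_cases hJ : (k, l) ∈ J
    · rw [(hAbar k l).1 hJ]
      exact mul_pos (lt_of_lt_of_le one_pos hp) hApos
    · rw [(hAbar k l).2 hJ]
      exact hApos
  have hrkW := rank_add_ker (Lap W)
  have hrkA := rank_add_ker (Lap A)
  -- Claim 1 : n ≤ rank (Lap W) + d
  have claim1 : n ≤ (Lap W).rank + d := by
    by_contra hlt
    push_neg at hlt
    have hkW : d < Module.finrank ℝ (LinearMap.ker (Lap W).mulVecLin) := by omega
    by_cases hedge : ∃ i j, A i j ≠ 0 ∧ Zs i j = 0
    · obtain ⟨i, j, hAij, hZij⟩ := hedge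
      set Z' : Matrix (Fin n) (Fin n) ℝ :=
        Matrix.of fun k l => if (k = i ∧ l = j) ∨ (k = j ∧ l = i) then 1 else Zs k l with hZ'def
      set W' := Matrix.hadamard A Z' with hW'def
      -- the constrained kernel
      let φ : (Fin n → ℝ) →ₗ[ℝ] ℝ := (LinearMap.proj i : (Fin n → ℝ) →ₗ[ℝ] ℝ) - (LinearMap.proj j : (Fin n → ℝ) →ₗ[ℝ] ℝ)
      let K : Submodule ℝ (Fin n → ℝ) := LinearMap.ker (Lap W).mulVecLin ⊓ LinearMap.ker φ
      have hkerφ : n - 1 ≤ Module.finrank ℝ (LinearMap.ker φ) := by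
        have h1 := LinearMap.finrank_range_add_finrank_ker φ
        have h2 : Module.finrank ℝ (LinearMap.range φ) ≤ 1 := by
          have := Submodule.finrank_le (LinearMap.range φ)
          simpa using this
        have h3 : Module.finrank ℝ (Fin n → ℝ) = n := by simp
        omega
      have hKd : d ≤ Module.finrank ℝ K := by
        have h1 := Submodule.finrank_sup_add_finrank_inf_eq
          (LinearMap.ker (Lap W).mulVecLin) (LinearMap.ker φ)
        have h2 := Submodule.finrank_le (LinearMap.ker (Lap W).mulVecLin ⊔ LinearMap.ker φ)
        have h3 : Module.finrank ℝ (Fin n → ℝ) = n := by simp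
        have h4 : Module.finrank ℝ K
            = Module.finrank ℝ ↥(LinearMap.ker (Lap W).mulVecLin ⊓ LinearMap.ker φ) := rfl
        omega
      obtain ⟨H', hH'orth, hH'mem⟩ := exists_ortho K hKd
      -- columns of H' are in ker (Lap W')
      have hker' : ∀ c, (fun k => H' k c) ∈ LinearMap.ker (Lap W').mulVecLin := by
        intro c
        obtain ⟨hx1, hx2⟩ := Submodule.mem_inf.mp (hH'mem c)
        rw [LinearMap.mem_ker, Matrix.mulVecLin_apply] at hx1 ⊢
        have hcond := ker_lap_eq W hWsym hWnn _ hx1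
        have hxij : H' i c = H' j c := by
          have := hx2
          rw [LinearMap.mem_ker] at this
          have : H' i c - H' j c = 0 := this
          linarith
        apply mem_ker_lap
        intro k l hw
        rw [hW'def, hadamard_apply, hZ'def, of_apply] at hw
        by_cases hc : (k = i ∧ l = j) ∨ (k = j ∧ l = i)
        · rcases hc with ⟨hk, hl⟩ | ⟨hk, hl⟩
          · rw [hk, hl]; exact hxij
          · rw [hk, hl]; exact hxij.symm
        · rw [if_neg hc] at hw
          exact hcond k l hw
      have htr0 : Matrix.trace (H'ᵀ * Lap W' * H') = 0 := lap_mul_eq_zero W' H' hker'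
      have hfeas' : feasCP A Z' H' :=
        feas_update A Zs hAsym hZsym hsupp hbox i j hAij H' hH'orth
      have hcmp := hmin Z' H' hfeas'
      have htrZ' := trace_update Abar Zs i j (hZs i j)
      have hnn := trace_lap_nonneg W hWsym hWnn Hs
      have hδpos : 0 < (if i = j then Abar i j * (1 - Zs i j)
           else Abar j i * (1 - Zs i j) + Abar i j * (1 - Zs i j)) := by
        have h1 : 0 < Abar i j := hAbarpos i j hAij
        have h2 : 0 < Abar j i := hAbarpos j i (by rw [hAs]; exact hAij)
        have h3 : (0:ℝ) < 1 - Zs i j := by rw [hZij]; norm_num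
        by_cases hc : i = j
        · rw [if_pos hc]; exact mul_pos h1 h3
        · rw [if_neg hc]; have := mul_pos h2 h3; have := mul_pos h1 h3; linarith
      rw [fobj, fobj, ← hWdef, ← hW'def, htr0, htrZ'] at hcmp
      nlinarith
    · push_neg at hedge
      have hsub : LinearMap.ker (Lap W).mulVecLin ≤ LinearMap.ker (Lap A).mulVecLin := by
        intro x hx
        rw [LinearMap.mem_ker, Matrix.mulVecLin_apply] at hx ⊢
        have hcond := ker_lap_eq W hWsym hWnn x hx
        apply mem_ker_lap
        intro k l hA
        apply hcond
        rw [hWdef, hadamard_apply]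
        exact mul_ne_zero hA (hedge k l hA)
      have hmono := Submodule.finrank_mono hsub
      omega
  -- Claim 2 : rank = n - d → binary
  have claim2 : ((Lap W).rank : ℤ) = (n : ℤ) - (d : ℤ) → ∀ i j, Zs i j = 0 ∨ Zs i j = 1 := by
    intro hrank i j
    by_contra hbin
    push_neg at hbin
    obtain ⟨hbin0, hbin1⟩ := hbin
    have hAij : A i j ≠ 0 := hsupp i j hbin0
    have hApos : 0 < A i j := lt_of_le_of_ne (hAnn i j) (Ne.symm hAij)
    have hZpos : 0 < Zs i j := lt_of_le_of_ne (hbox i j).1 (Ne.symm hbin0)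
    have hZlt : Zs i j < 1 := lt_of_le_of_ne (hbox i j).2 hbin1
    have hWij : W i j ≠ 0 := by
      rw [hWdef, hadamard_apply]
      exact ne_of_gt (mul_pos hApos hZpos)
    have hkW : d ≤ Module.finrank ℝ (LinearMap.ker (Lap W).mulVecLin) := by omega
    obtain ⟨H₀, hH₀orth, hH₀mem⟩ := exists_ortho _ hkW
    have htr0 : Matrix.trace (H₀ᵀ * Lap W * H₀) = 0 := lap_mul_eq_zero W H₀ hH₀mem
    have hfeas0 : feasCP A Zs H₀ := ⟨hZsym, hsupp, hbox, hH₀orth⟩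
    have hcmp0 := hmin Zs H₀ hfeas0
    rw [fobj, fobj, ← hWdef, htr0] at hcmp0
    have hnn := trace_lap_nonneg W hWsym hWnn Hs
    have htrHs : Matrix.trace (Hsᵀ * Lap W * Hs) = 0 := by linarith
    -- q i j = 0
    have hq : (∑ c, (Hs i c - Hs j c)^2) = 0 := by
      by_cases hc : i = j
      · simp [hc]
      · rw [trace_lap W hWsym] at htrHs
        have hsum : ∑ k, ∑ l, W k l * (∑ c, (Hs k c - Hs l c)^2) = 0 := by linarith
        have h1 : ∀ k ∈ Finset.univ, (0:ℝ) ≤ ∑ l, W k l * (∑ c, (Hs k c - Hs l c)^2) :=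
          fun k _ => Finset.sum_nonneg fun l _ => mul_nonneg (hWnn k l)
            (Finset.sum_nonneg fun c _ => sq_nonneg _)
        have h2 := (Finset.sum_eq_zero_iff_of_nonneg h1).mp hsum i (Finset.mem_univ i)
        have h3 := (Finset.sum_eq_zero_iff_of_nonneg
          (fun l _ => mul_nonneg (hWnn i l)
            (Finset.sum_nonneg fun c _ => sq_nonneg _))).mp h2 j (Finset.mem_univ j)
        rcases mul_eq_zero.mp h3 with h | h
        · exact absurd h hWij
        · exact h
    have hqji : (∑ c, (Hs j c - Hs i c)^2) = 0 := by
      rw [← hq]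
      exact Finset.sum_congr rfl fun c _ => by ring
    set Z' : Matrix (Fin n) (Fin n) ℝ :=
      Matrix.of fun k l => if (k = i ∧ l = j) ∨ (k = j ∧ l = i) then 1 else Zs k l with hZ'def
    set W' := Matrix.hadamard A Z' with hW'def
    have hfeas' : feasCP A Z' Hs :=
      feas_update A Zs hAsym hZsym hsupp hbox i j hAij Hs hH
    have hW'sym : W'ᵀ = W' := by
      have := hfeas'.1
      ext k l
      simp only [transpose_apply, hW'def, hadamard_apply]
      rw [hAs]
      congr 1
      conv_lhs => rw [← this, transpose_apply]
    -- Laplacian terms are equal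
    have htrW' : Matrix.trace (Hsᵀ * Lap W' * Hs) = Matrix.trace (Hsᵀ * Lap W * Hs) := by
      rw [trace_lap W hWsym, trace_lap W' hW'sym]
      congr 1
      refine Finset.sum_congr rfl fun k _ => Finset.sum_congr rfl fun l _ => ?_
      by_cases hc : (k = i ∧ l = j) ∨ (k = j ∧ l = i)
      · rcases hc with ⟨hk, hl⟩ | ⟨hk, hl⟩
        · rw [hk, hl, hq, mul_zero, mul_zero]
        · rw [hk, hl, hqji, mul_zero, mul_zero]
      · rw [hW'def, hadamard_apply, hZ'def, of_apply, if_neg hc, ← hadamard_apply, ← hWdef]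
    have hcmp := hmin Z' Hs hfeas'
    have htrZ' := trace_update Abar Zs i j (hZs i j)
    have hδpos : 0 < (if i = j then Abar i j * (1 - Zs i j)
         else Abar j i * (1 - Zs i j) + Abar i j * (1 - Zs i j)) := by
      have h1 : 0 < Abar i j := hAbarpos i j hAij
      have h2 : 0 < Abar j i := hAbarpos j i (by rw [hAs]; exact hAij)
      have h3 : (0:ℝ) < 1 - Zs i j := by linarith
      by_cases hc : i = j
      · rw [if_pos hc]; exact mul_pos h1 h3
      · rw [if_neg hc]; have := mul_pos h2 h3; have := mul_pos h1 h3; linarith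
    rw [fobj, fobj, ← hWdef, ← hW'def, htrW', htrHs, htrZ'] at hcmp
    nlinarith
  -- assemble
  by_cases heq : ((Lap W).rank : ℤ) = (n : ℤ) - (d : ℤ)
  · right
    refine ⟨⟨heq, claim2 heq⟩, ?_⟩
    omega
  · left
    have hrk : (Lap W).rank ≤ n := by omega
    refine ⟨?_, fun hqq => heq hqq.1⟩
    omega
end

section
/- Let A be a nonnegative symmetric n×n real matrix, let J ⊆ supp(A) be a symmetric label set with A_{ij} > 0 for all (i,j) ∈ J, let p ≥ 1 define Ā by Ā_{ij} = p·A_{ij} if (i,j) ∈ J and Ā_{ij} = A_{ij} otherwise, and suppose n − rank(L(A)) ≤ d < n. If β > 1, then every global minimizer (Z*, H*) of problem (CP) satisfies Z* = sign(A), where sign(A) is the matrix with (sign(A))_{ij} = 1 if A_{ij} > 0 and 0 if A_{ij} = 0. -/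
open Matrix BigOperators

lemma lap_add {n : ℕ} (M N : Matrix (Fin n) (Fin n) ℝ) : Lap (M + N) = Lap M + Lap N := by
  unfold Lap
  ext a b
  simp [Matrix.diagonal, Finset.sum_add_distrib]
  split <;> ring

lemma had_std {n : ℕ} (A : Matrix (Fin n) (Fin n) ℝ) (i j : Fin n) (c : ℝ) :
    Matrix.hadamard A (Matrix.single i j c) = Matrix.single i j (A i j * c) := by
  ext a b
  simp [Matrix.hadamard, Matrix.single]
  aesop

lemma lap_std {n : ℕ} (i j : Fin n) (c : ℝ) :
    Lap (Matrix.single i j c) =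
      Matrix.single i i c - Matrix.single i j c := by
  unfold Lap
  ext a b
  simp [Matrix.diagonal, Matrix.single, ite_and]
  aesop

lemma trace_conj_std {n d : ℕ} (H : Matrix (Fin n) (Fin d) ℝ) (i j : Fin n) (c : ℝ) :
    Matrix.trace (Hᵀ * Matrix.single i j c * H) = c * ∑ k, H i k * H j k := by
  simp [Matrix.trace, Matrix.mul_apply, Matrix.diag, Matrix.single, ite_and,
    Finset.mul_sum, Finset.sum_mul]
  apply Finset.sum_congr rfl
  intro k _
  ring

lemma trace_mul_std {n : ℕ} (M : Matrix (Fin n) (Fin n) ℝ) (i j : Fin n) (c : ℝ) :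
    Matrix.trace (M * Matrix.single i j c) = c * M j i := by
  simp [Matrix.trace, Matrix.mul_apply, Matrix.diag, Matrix.single, ite_and,
    Finset.mul_sum, Finset.sum_mul]
  ring

lemma row_diff_sq_le_two {n d : ℕ} (H : Matrix (Fin n) (Fin d) ℝ) (hH : Hᵀ * H = 1)
    (i j : Fin n) (hij : i ≠ j) : ∑ k, (H i k - H j k) ^ 2 ≤ 2 := by
  set u : Fin d → ℝ := fun k => H i k - H j k with hu
  set y : Fin n → ℝ := fun a => ∑ k, H a k * u k with hy
  set Q : ℝ := ∑ k, (u k) ^ 2 with hQ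
  have hQnn : 0 ≤ Q := Finset.sum_nonneg fun k _ => sq_nonneg _
  have h1 : ∑ a, (y a) ^ 2 = Q := by
    have horth : ∀ k l, ∑ a, H a k * H a l = if k = l then (1:ℝ) else 0 := by
      intro k l
      have := congrFun (congrFun hH k) l
      simpa [Matrix.mul_apply, Matrix.one_apply, Matrix.transpose_apply] using this
    calc ∑ a, (y a) ^ 2 = ∑ a, ∑ k, ∑ l, (H a k * H a l) * (u k * u l) := by
          apply Finset.sum_congr rfl; intro a _
          rw [sq, hy, Finset.sum_mul_sum]
          apply Finset.sum_congr rfl; intro k _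
          apply Finset.sum_congr rfl; intro l _
          ring
      _ = ∑ k, ∑ l, (∑ a, H a k * H a l) * (u k * u l) := by
          rw [Finset.sum_comm]
          apply Finset.sum_congr rfl; intro k _
          rw [Finset.sum_comm]
          apply Finset.sum_congr rfl; intro l _
          rw [Finset.sum_mul]
      _ = ∑ k, (u k) ^ 2 := by
          apply Finset.sum_congr rfl; intro k _
          rw [Finset.sum_eq_single k]
          · simp [horth k k]; ring
          · intro l _ hlk; simp [horth k l, Ne.symm hlk]
          · simp
  have h2 : Q = y i - y j := by
    show (∑ k, (u k)^2) = (∑ k, H i k * u k) - (∑ k, H j k * u k)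
    rw [← Finset.sum_sub_distrib]
    apply Finset.sum_congr rfl; intro k _
    simp only [hu]; ring
  have h3 : y i ^ 2 + y j ^ 2 ≤ ∑ a, (y a) ^ 2 := by
    have : ∑ a ∈ ({i, j} : Finset (Fin n)), (y a) ^ 2 ≤ ∑ a, (y a) ^ 2 :=
      Finset.sum_le_sum_of_subset_of_nonneg (Finset.subset_univ _)
        (fun a _ _ => sq_nonneg _)
    rwa [Finset.sum_pair hij] at this
  nlinarith [sq_nonneg (y i + y j), sq_nonneg (y i - y j), sq_nonneg (Q - 2)]

lemma fobj_add {n d : ℕ} (A Abar : Matrix (Fin n) (Fin n) ℝ) (β : ℝ)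
    (Z D : Matrix (Fin n) (Fin n) ℝ) (H : Matrix (Fin n) (Fin d) ℝ) :
    fobj A Abar β (Z + D) H =
      fobj A Abar β Z H +
        (Matrix.trace (Hᵀ * Lap (Matrix.hadamard A D) * H) - β * Matrix.trace (Abar * D)) := by
  unfold fobj
  rw [Matrix.hadamard_add, lap_add, Matrix.mul_add, Matrix.add_mul, Matrix.trace_add,
    Matrix.mul_add, Matrix.trace_add]
  ring

theorem stmt10 {n d : ℕ} (A Abar : Matrix (Fin n) (Fin n) ℝ)
    (hAsym : Aᵀ = A) (hAnn : ∀ i j, 0 ≤ A i j)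
    (J : Set (Fin n × Fin n))
    (hJsym : ∀ i j, (i, j) ∈ J ↔ (j, i) ∈ J)
    (hJpos : ∀ i j, (i, j) ∈ J → 0 < A i j)
    (p : ℝ) (hp : 1 ≤ p)
    (hAbar : ∀ i j, ((i, j) ∈ J → Abar i j = p * A i j) ∧ ((i, j) ∉ J → Abar i j = A i j))
    (hd₁ : (n : ℤ) - (Lap A).rank ≤ (d : ℤ)) (hd₂ : d < n)
    (β : ℝ) (hβ : 1 < β)
    (Zs : Matrix (Fin n) (Fin n) ℝ) (Hs : Matrix (Fin n) (Fin d) ℝ)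
    (hfeas : feasCP A Zs Hs)
    (hmin : ∀ (Z : Matrix (Fin n) (Fin n) ℝ) (H : Matrix (Fin n) (Fin d) ℝ),
      feasCP A Z H → fobj A Abar β Zs Hs ≤ fobj A Abar β Z H) :
    (∀ i j, A i j = 0 → Zs i j = 0) ∧ (∀ i j, A i j ≠ 0 → Zs i j = 1) := by
  obtain ⟨hZsym, hsupp, hbox, hH⟩ := hfeas
  constructor
  · intro i j hA0
    by_contra hZ
    exact hsupp i j hZ hA0
  intro i j hA
  have hApos : 0 < A i j := lt_of_le_of_ne (hAnn i j) (Ne.symm hA)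
  -- Abar i j ≥ A i j
  have hAbar_ge : A i j ≤ Abar i j := by
    by_cases hJ : (i, j) ∈ J
    · rw [(hAbar i j).1 hJ]
      nlinarith
    · rw [(hAbar i j).2 hJ]
  by_contra hne
  have ht : Zs i j < 1 := lt_of_le_of_ne (hbox i j).2 hne
  set t : ℝ := 1 - Zs i j with htdef
  have htpos : 0 < t := by simp [htdef]; linarith
  have hZji : Zs j i = Zs i j := by
    rw [show Zs j i = Zsᵀ i j from rfl, hZsym]
  have hAji : A j i = A i j := by
    rw [show A j i = Aᵀ i j from rfl, hAsym]
  by_cases hij : i = j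
  · -- diagonal case
    subst hij
    set Z' : Matrix (Fin n) (Fin n) ℝ := Zs + Matrix.single i i t with hZ'
    have hZ'app : ∀ a b, Z' a b = Zs a b + (if i = a ∧ i = b then t else 0) := by
      intro a b; simp [hZ', Matrix.single]
    have hfeas' : feasCP A Z' Hs := by
      refine ⟨?_, ?_, ?_, hH⟩
      · ext a b
        rw [Matrix.transpose_apply, hZ'app, hZ'app, ← Matrix.transpose_apply Zs, hZsym]
        congr 1
        simp [and_comm]
      · intro a b hZab
        rw [hZ'app] at hZab
        by_cases hab : i = a ∧ i = b
        · obtain ⟨ha, hb⟩ := hab; subst ha; subst hb; exact hA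
        · rw [if_neg hab, add_zero] at hZab
          exact hsupp a b hZab
      · intro a b
        rw [hZ'app]
        by_cases hab : i = a ∧ i = b
        · obtain ⟨ha, hb⟩ := hab; subst ha; subst hb
          rw [if_pos ⟨rfl, rfl⟩]
          constructor <;> [linarith [(hbox i i).1]; linarith]
        · rw [if_neg hab, add_zero]
          exact hbox a b
    have hstep := hmin Z' Hs hfeas'
    rw [hZ', fobj_add, had_std, lap_std, sub_self, Matrix.mul_zero, Matrix.zero_mul,
      Matrix.trace_zero, trace_mul_std] at hstep
    have hAbii : 0 < Abar i i := lt_of_lt_of_le hApos hAbar_ge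
    nlinarith [mul_pos (mul_pos (show (0:ℝ) < β by linarith) htpos) hAbii]
  · -- off-diagonal case
    set Z' : Matrix (Fin n) (Fin n) ℝ :=
      Zs + (Matrix.single i j t + Matrix.single j i t) with hZ'
    have hZ'app : ∀ a b, Z' a b =
        Zs a b + ((if i = a ∧ j = b then t else 0) + (if j = a ∧ i = b then t else 0)) := by
      intro a b; simp [hZ', Matrix.single]
    have hfeas' : feasCP A Z' Hs := by
      refine ⟨?_, ?_, ?_, hH⟩
      · ext a b
        rw [Matrix.transpose_apply, hZ'app, hZ'app, ← Matrix.transpose_apply Zs, hZsym]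
        congr 1
        rw [add_comm (if i = b ∧ j = a then t else 0)]
        congr 1 <;> · congr 1; simp [and_comm]
      · intro a b hZab
        rw [hZ'app] at hZab
        by_cases hab1 : i = a ∧ j = b
        · obtain ⟨ha, hb⟩ := hab1; subst ha; subst hb; exact hA
        · by_cases hab2 : j = a ∧ i = b
          · obtain ⟨ha, hb⟩ := hab2; subst ha; subst hb
            rw [hAji]; exact hA
          · rw [if_neg hab1, if_neg hab2, add_zero, add_zero] at hZab
            exact hsupp a b hZab
      · intro a b
        rw [hZ'app]
        by_cases hab1 : i = a ∧ j = b
        · obtain ⟨ha, hb⟩ := hab1; subst ha; subst hb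
          rw [if_pos ⟨rfl, rfl⟩, if_neg (by tauto), add_zero]
          constructor <;> [linarith [(hbox i j).1]; linarith]
        · by_cases hab2 : j = a ∧ i = b
          · obtain ⟨ha, hb⟩ := hab2; subst ha; subst hb
            rw [if_neg (by tauto), if_pos ⟨rfl, rfl⟩, zero_add]
            rw [hZji]
            constructor <;> [linarith [(hbox i j).1]; linarith]
          · rw [if_neg hab1, if_neg hab2, add_zero, add_zero]
            exact hbox a b
    have hstep := hmin Z' Hs hfeas'
    rw [hZ', fobj_add, Matrix.hadamard_add, had_std, had_std, lap_add, lap_std, lap_std,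
      Matrix.mul_add, Matrix.add_mul, Matrix.trace_add, Matrix.mul_add, Matrix.trace_add,
      Matrix.mul_sub, Matrix.sub_mul, Matrix.trace_sub,
      Matrix.mul_sub, Matrix.sub_mul, Matrix.trace_sub,
      trace_conj_std, trace_conj_std, trace_conj_std, trace_conj_std,
      trace_mul_std, trace_mul_std] at hstep
    have hAbarji : Abar j i = Abar i j := by
      by_cases hJ : (i, j) ∈ J
      · rw [(hAbar j i).1 ((hJsym i j).mp hJ), (hAbar i j).1 hJ, hAji]
      · rw [(hAbar j i).2 (fun hc => hJ ((hJsym j i).mp hc)), (hAbar i j).2 hJ, hAji]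
    rw [hAji, hAbarji] at hstep
    -- hstep : 0 ≤ A i j * t * (∑ H i k H i k - ∑ H i k H j k + ∑ H j k H j k - ∑ H j k H i k)
    --          - β * (2 * t * Abar i j)   (roughly)
    have hQ : (∑ k, Hs i k * Hs i k) - (∑ k, Hs i k * Hs j k) +
        ((∑ k, Hs j k * Hs j k) - (∑ k, Hs j k * Hs i k)) = ∑ k, (Hs i k - Hs j k) ^ 2 := by
      rw [← Finset.sum_sub_distrib, ← Finset.sum_sub_distrib, ← Finset.sum_add_distrib]
      apply Finset.sum_congr rfl; intro k _; ring
    have hQle : ∑ k, (Hs i k - Hs j k) ^ 2 ≤ 2 := row_diff_sq_le_two Hs hH i j hij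
    have hQnn : 0 ≤ ∑ k, (Hs i k - Hs j k) ^ 2 :=
      Finset.sum_nonneg fun k _ => sq_nonneg _
    nlinarith [hstep, hQ, mul_pos hApos htpos,
      mul_le_mul_of_nonneg_left hAbar_ge (le_of_lt (mul_pos htpos (by linarith : (0:ℝ) < β)))]
end

section
/- Let A be a nonnegative symmetric n×n real matrix, Ā an n×n matrix with supp(Ā) = supp(A), β > 0, Z ∈ S^n_A ∩ {0,1}^{n×n}, and H ∈ ℝ^{n×d} with H^⊤ H = I_d. Define G ∈ ℝ^{n×n} by G_{ij} = (A_{ij}((HH^⊤)_{ii} − (HH^⊤)_{ij}) − β Ā_{ij}) + (A_{ji}((HH^⊤)_{jj} − (HH^⊤)_{ji}) − β Ā_{ji}), and define Z' by Z'_{ij} = 0 if G_{ij} > 0, Z'_{ij} = Z_{ij} if G_{ij} = 0, and Z'_{ij} = 1 if G_{ij} < 0. Then either f(Z, H) > f(Z', H) or Z' = Z, where f(Z,H) := tr(H^⊤ L(A∘Z) H) − β tr(Ā Z). -/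
open Matrix BigOperators

lemma fobj_expand {n d : ℕ} (A Abar : Matrix (Fin n) (Fin n) ℝ) (β : ℝ)
    (Z : Matrix (Fin n) (Fin n) ℝ) (H : Matrix (Fin n) (Fin d) ℝ) :
    fobj A Abar β Z H = ∑ i, ∑ j,
      (A i j * Z i j * ((H * Hᵀ) i i - (H * Hᵀ) j i) - β * (Abar i j * Z j i)) := by
  have h1 : Matrix.trace (Hᵀ * Lap (Matrix.hadamard A Z) * H)
      = Matrix.trace (Lap (Matrix.hadamard A Z) * (H * Hᵀ)) := by
    rw [Matrix.trace_mul_comm, ← Matrix.mul_assoc, Matrix.trace_mul_comm]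
  rw [fobj, h1]
  set P := H * Hᵀ with hP
  clear_value P
  simp only [Lap, Matrix.sub_mul, Matrix.trace_sub]
  simp only [Matrix.trace, Matrix.diag, Matrix.mul_apply, Matrix.diagonal_apply,
    Matrix.hadamard_apply, Finset.sum_ite_eq, Finset.mem_univ, if_true,
    ite_mul, zero_mul, Finset.sum_ite_eq, Finset.sum_mul, Finset.mul_sum]
  rw [← Finset.sum_sub_distrib, ← Finset.sum_sub_distrib]
  apply Finset.sum_congr rfl; intro i _
  rw [← Finset.sum_sub_distrib, ← Finset.sum_sub_distrib]
  apply Finset.sum_congr rfl; intro j _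
  ring

theorem stmt13 {n d : ℕ} (A Abar : Matrix (Fin n) (Fin n) ℝ)
    (hAsym : Aᵀ = A) (hAnn : ∀ i j, 0 ≤ A i j)
    (hsupp : ∀ i j, Abar i j ≠ 0 ↔ A i j ≠ 0)
    (β : ℝ) (hβ : 0 < β)
    (Z : Matrix (Fin n) (Fin n) ℝ)
    (hZsym : Zᵀ = Z) (hZsupp : ∀ i j, Z i j ≠ 0 → A i j ≠ 0)
    (hZbin : ∀ i j, Z i j = 0 ∨ Z i j = 1)
    (H : Matrix (Fin n) (Fin d) ℝ) (hH : Hᵀ * H = 1)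
    (G : Matrix (Fin n) (Fin n) ℝ)
    (hG : ∀ i j, G i j =
      (A i j * ((H * Hᵀ) i i - (H * Hᵀ) i j) - β * Abar i j) +
      (A j i * ((H * Hᵀ) j j - (H * Hᵀ) j i) - β * Abar j i))
    (Z' : Matrix (Fin n) (Fin n) ℝ)
    (hZ' : ∀ i j, (0 < G i j → Z' i j = 0) ∧ (G i j = 0 → Z' i j = Z i j) ∧
      (G i j < 0 → Z' i j = 1)) :
    fobj A Abar β Z' H < fobj A Abar β Z H ∨ Z' = Z := by
  have hPsym : ∀ i j, (H * Hᵀ) i j = (H * Hᵀ) j i := by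
    intro i j
    have h : (H * Hᵀ)ᵀ = H * Hᵀ := by
      rw [Matrix.transpose_mul, Matrix.transpose_transpose]
    have h2 := congrFun (congrFun h j) i
    rwa [Matrix.transpose_apply] at h2
  have hZs : ∀ i j, Z j i = Z i j := by
    intro i j
    have := congrFun (congrFun hZsym i) j
    rwa [Matrix.transpose_apply] at this
  have hGsym : ∀ i j, G j i = G i j := by
    intro i j; rw [hG, hG]; ring
  have hZ's : ∀ i j, Z' j i = Z' i j := by
    intro i j
    rcases lt_trichotomy (G i j) 0 with h | h | h
    · rw [(hZ' i j).2.2 h, (hZ' j i).2.2 (by rw [hGsym]; exact h)]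
    · rw [(hZ' i j).2.1 h, (hZ' j i).2.1 (by rw [hGsym]; exact h)]
      exact hZs i j
    · rw [(hZ' i j).1 h, (hZ' j i).1 (by rw [hGsym]; exact h)]
  set t : Fin n → Fin n → ℝ := fun i j =>
    (A i j * Z' i j * ((H * Hᵀ) i i - (H * Hᵀ) j i) - β * (Abar i j * Z' j i))
    - (A i j * Z i j * ((H * Hᵀ) i i - (H * Hᵀ) j i) - β * (Abar i j * Z j i)) with ht
  have hdiff : fobj A Abar β Z' H - fobj A Abar β Z H = ∑ i, ∑ j, t i j := by
    rw [fobj_expand, fobj_expand, ← Finset.sum_sub_distrib]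
    apply Finset.sum_congr rfl; intro i _
    rw [← Finset.sum_sub_distrib]
  have hsum2 : ∑ i, ∑ j, (Z' i j - Z i j) * G i j = (∑ i, ∑ j, t i j) + (∑ i, ∑ j, t i j) := by
    nth_rewrite 2 [Finset.sum_comm (f := t)]
    rw [← Finset.sum_add_distrib]
    apply Finset.sum_congr rfl; intro i _
    rw [← Finset.sum_add_distrib]
    apply Finset.sum_congr rfl; intro j _
    rw [ht]
    simp only
    rw [hG i j, hZ's i j, hZs i j, hPsym j i]
    ring
  have key : fobj A Abar β Z' H - fobj A Abar β Z H
      = (1/2) * ∑ i, ∑ j, (Z' i j - Z i j) * G i j := by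
    rw [hsum2, hdiff]; ring
  by_cases hall : ∀ i j, Z' i j = Z i j
  · right; ext i j; exact hall i j
  · left
    have hterm : ∀ i j, (Z' i j - Z i j) * G i j ≤ 0 := by
      intro i j
      rcases lt_trichotomy (G i j) 0 with h | h | h
      · rw [(hZ' i j).2.2 h]
        rcases hZbin i j with hz | hz <;> rw [hz] <;> nlinarith
      · rw [(hZ' i j).2.1 h, h]; ring_nf; exact le_refl 0
      · rw [(hZ' i j).1 h]
        rcases hZbin i j with hz | hz <;> rw [hz] <;> nlinarith
    have hterm' : ∀ i j, Z' i j ≠ Z i j → (Z' i j - Z i j) * G i j < 0 := by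
      intro i j hne
      rcases lt_trichotomy (G i j) 0 with h | h | h
      · rw [(hZ' i j).2.2 h]
        rcases hZbin i j with hz | hz
        · rw [hz]; nlinarith
        · exact absurd (((hZ' i j).2.2 h).trans hz.symm) hne
      · exact absurd ((hZ' i j).2.1 h) hne
      · rw [(hZ' i j).1 h]
        rcases hZbin i j with hz | hz
        · exact absurd (((hZ' i j).1 h).trans hz.symm) hne
        · rw [hz]; nlinarith
    push_neg at hall
    obtain ⟨i0, j0, hij⟩ := hall
    have hneg : ∑ i, ∑ j, (Z' i j - Z i j) * G i j < 0 := by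
      rw [← Finset.sum_product']
      have h0 : (0:ℝ) = ∑ _p ∈ (Finset.univ ×ˢ Finset.univ : Finset (Fin n × Fin n)), (0:ℝ) := by
        simp
      rw [h0]
      refine Finset.sum_lt_sum (fun p _ => hterm p.1 p.2) ⟨(i0, j0), Finset.mem_univ _, ?_⟩
      exact hterm' i0 j0 hij
    linarith
end

section
/- Let B and E be nonnegative symmetric n×n real matrices, and suppose there exist indices i₀ ≠ j₀ such that E_{ij} = 0 for all (i,j) ∉ {(i₀,j₀), (j₀,i₀)}. Then rank(L(B)) ≤ rank(L(B + E)) ≤ rank(L(B)) + 1. -/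
open Matrix BigOperators

lemma lap_quadform {n : ℕ} (M : Matrix (Fin n) (Fin n) ℝ) (x : Fin n → ℝ) :
    x ⬝ᵥ (Lap M *ᵥ x) = ∑ i, ∑ j, M i j * (x i * (x i - x j)) := by
  unfold Lap
  rw [sub_mulVec]
  simp only [dotProduct, Pi.sub_apply, mulVec_diagonal]
  apply Finset.sum_congr rfl
  intro i _
  simp only [mulVec, dotProduct]
  rw [mul_sub, Finset.sum_mul, Finset.mul_sum, Finset.mul_sum, ← Finset.sum_sub_distrib]
  apply Finset.sum_congr rfl
  intro j _
  ring

lemma lap_psd {n : ℕ} (M : Matrix (Fin n) (Fin n) ℝ)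
    (hsym : Mᵀ = M) (hnn : ∀ i j, 0 ≤ M i j) : (Lap M).PosSemidef := by
  have hMs : ∀ a b, M a b = M b a := fun a b => by
    conv_lhs => rw [← hsym, transpose_apply]
  refine Matrix.PosSemidef.of_dotProduct_mulVec_nonneg ?_ ?_
  · show (Lap M)ᵀ = Lap M
    unfold Lap
    rw [transpose_sub, diagonal_transpose, hsym]
  · intro x
    simp only [star_trivial]
    rw [lap_quadform]
    have key : (2:ℝ) * ∑ i, ∑ j, M i j * (x i * (x i - x j))
        = ∑ i, ∑ j, M i j * (x i - x j)^2 := by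
      have hswap : ∑ i, ∑ j, M i j * (x i * (x i - x j))
          = ∑ i, ∑ j, M i j * (x j * (x j - x i)) := by
        rw [Finset.sum_comm]
        apply Finset.sum_congr rfl; intro i _
        apply Finset.sum_congr rfl; intro j _
        rw [hMs j i]
      rw [two_mul]
      nth_rewrite 2 [hswap]
      rw [← Finset.sum_add_distrib]
      apply Finset.sum_congr rfl; intro i _
      rw [← Finset.sum_add_distrib]
      apply Finset.sum_congr rfl; intro j _
      ring
    nlinarith [Finset.sum_nonneg (fun i (_ : i ∈ Finset.univ) =>
      Finset.sum_nonneg (fun j (_ : j ∈ Finset.univ) =>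
        mul_nonneg (hnn i j) (sq_nonneg (x i - x j))))]

theorem stmt15 {n : ℕ} (B E : Matrix (Fin n) (Fin n) ℝ)
    (hBsym : Bᵀ = B) (hBnn : ∀ i j, 0 ≤ B i j)
    (hEsym : Eᵀ = E) (hEnn : ∀ i j, 0 ≤ E i j)
    (i₀ j₀ : Fin n) (hij : i₀ ≠ j₀)
    (hE : ∀ i j, (i, j) ≠ (i₀, j₀) → (i, j) ≠ (j₀, i₀) → E i j = 0) :
    (Lap B).rank ≤ (Lap (B + E)).rank ∧ (Lap (B + E)).rank ≤ (Lap B).rank + 1 := by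
  have hLadd : Lap (B + E) = Lap B + Lap E := by
    unfold Lap
    ext i j
    simp [diagonal, Finset.sum_add_distrib]
    split <;> ring
  have hBpsd := lap_psd B hBsym hBnn
  have hEpsd := lap_psd E hEsym hEnn
  have hEs : ∀ a b, E a b = E b a := fun a b => by
    conv_lhs => rw [← hEsym, transpose_apply]
  have hE' : ∀ i j, ¬(i = i₀ ∧ j = j₀) → ¬(i = j₀ ∧ j = i₀) → E i j = 0 := by
    intro i j h1 h2
    exact hE i j (by simpa [Prod.ext_iff] using h1) (by simpa [Prod.ext_iff] using h2)
  constructor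
  · -- kernel inclusion
    have hker : LinearMap.ker (Lap (B + E)).mulVecLin ≤ LinearMap.ker (Lap B).mulVecLin := by
      intro x hx
      rw [LinearMap.mem_ker, mulVecLin_apply] at hx ⊢
      have h0 : x ⬝ᵥ ((Lap B + Lap E) *ᵥ x) = 0 := by
        rw [← hLadd, hx, dotProduct_zero]
      rw [add_mulVec, dotProduct_add] at h0
      have h1 := hBpsd.dotProduct_mulVec_nonneg x
      have h2 := hEpsd.dotProduct_mulVec_nonneg x
      simp only [star_trivial] at h1 h2
      have hB0 : x ⬝ᵥ (Lap B *ᵥ x) = 0 := by linarith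
      exact (hBpsd.dotProduct_mulVec_zero_iff x).mp (by simpa using hB0)
    have r1 := LinearMap.finrank_range_add_finrank_ker (Lap B).mulVecLin
    have r2 := LinearMap.finrank_range_add_finrank_ker (Lap (B + E)).mulVecLin
    have hmono := Submodule.finrank_mono hker
    show Module.finrank ℝ (LinearMap.range (Lap B).mulVecLin)
      ≤ Module.finrank ℝ (LinearMap.range (Lap (B + E)).mulVecLin)
    omega
  · set v : Fin n → ℝ := fun i => if i = i₀ then (1:ℝ) else if i = j₀ then -1 else 0 with hv
    have hc : E j₀ i₀ = E i₀ j₀ := hEs j₀ i₀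
    have hva : v i₀ = 1 := by simp [hv]
    have hvb : v j₀ = -1 := by simp [hv, Ne.symm hij]
    have hvc : ∀ k, k ≠ i₀ → k ≠ j₀ → v k = 0 := by
      intro k h1 h2; simp [hv, h1, h2]
    have hdiag : ∀ k, E k k = 0 := fun k =>
      hE' k k (fun ⟨ha, hb⟩ => hij (ha.symm.trans hb)) (fun ⟨ha, hb⟩ => hij (hb.symm.trans ha))
    have hrow : ∀ i, ∑ j, E i j = if i = i₀ then E i₀ j₀ else if i = j₀ then E i₀ j₀ else 0 := by
      intro i
      by_cases h1 : i = i₀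
      · rw [if_pos h1, Finset.sum_eq_single j₀]
        · rw [h1]
        · intro b _ hb
          exact hE' i b (fun ⟨_, hb'⟩ => hb hb') (fun ⟨ha, _⟩ => hij (h1.symm.trans ha))
        · simp
      · by_cases h2 : i = j₀
        · rw [if_neg h1, if_pos h2, Finset.sum_eq_single i₀]
          · rw [h2, hc]
          · intro b _ hb
            exact hE' i b (fun ⟨ha, _⟩ => h1 ha) (fun ⟨_, hb'⟩ => hb hb')
          · simp
        · rw [if_neg h1, if_neg h2]
          apply Finset.sum_eq_zero
          intro b _
          exact hE' i b (fun ⟨ha, _⟩ => h1 ha) (fun ⟨ha, _⟩ => h2 ha)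
    have hLapE : Lap E = E i₀ j₀ • Matrix.vecMulVec v v := by
      ext i j
      simp only [Lap, Matrix.sub_apply, diagonal_apply, Matrix.smul_apply, vecMulVec_apply, smul_eq_mul]
      by_cases hieq : i = j
      · rw [if_pos hieq, ← hieq, hrow i, hdiag i, sub_zero]
        by_cases h1 : i = i₀
        · rw [if_pos h1, h1, hva]; ring
        · by_cases h2 : i = j₀
          · rw [if_neg h1, if_pos h2, h2, hvb]; ring
          · rw [if_neg h1, if_neg h2, hvc i h1 h2]; ring
      · rw [if_neg hieq, zero_sub]
        by_cases h1 : i = i₀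
        · by_cases h2 : j = j₀
          · rw [h1, h2, hva, hvb]; ring
          · have hji : j ≠ i₀ := fun h => hieq (h1.trans h.symm)
            rw [hE' i j (fun ⟨_, hb⟩ => h2 hb) (fun ⟨ha, _⟩ => hij (h1.symm.trans ha)),
              hvc j hji h2]
            ring
        · by_cases h3 : i = j₀
          · by_cases h4 : j = i₀
            · rw [h3, h4, hc, hva, hvb]; ring
            · have hjj : j ≠ j₀ := fun h => hieq (h3.trans h.symm)
              rw [hE' i j (fun ⟨ha, _⟩ => h1 ha) (fun ⟨_, hb⟩ => h4 hb), hvc j h4 hjj]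
              ring
          · rw [hE' i j (fun ⟨ha, _⟩ => h1 ha) (fun ⟨ha, _⟩ => h3 ha), hvc i h1 h3]
            ring
    have hrangeE : LinearMap.range (Lap E).mulVecLin ≤ Submodule.span ℝ {v} := by
      rintro _ ⟨x, rfl⟩
      rw [mulVecLin_apply, hLapE]
      have hmv : (E i₀ j₀ • Matrix.vecMulVec v v) *ᵥ x = (E i₀ j₀ * (v ⬝ᵥ x)) • v := by
        ext k
        simp only [mulVec, dotProduct, Matrix.smul_apply, vecMulVec_apply, smul_eq_mul,
          Pi.smul_apply]
        rw [Finset.mul_sum, Finset.sum_mul]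
        apply Finset.sum_congr rfl
        intro l _
        ring
      rw [hmv]
      exact Submodule.smul_mem _ _ (Submodule.mem_span_singleton_self _)
    have hrankE : (Lap E).rank ≤ 1 :=
      (Submodule.finrank_mono hrangeE).trans (by simpa using finrank_span_le_card ({v} : Set (Fin n → ℝ)))
    have hsub : (Lap (B + E)).rank ≤ (Lap B).rank + (Lap E).rank := by
      have hle : LinearMap.range (Lap (B + E)).mulVecLin ≤
          LinearMap.range (Lap B).mulVecLin ⊔ LinearMap.range (Lap E).mulVecLin := by
        rintro _ ⟨x, rfl⟩
        rw [mulVecLin_apply, hLadd, add_mulVec]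
        exact Submodule.add_mem_sup ⟨x, rfl⟩ ⟨x, rfl⟩
      calc (Lap (B + E)).rank ≤ Module.finrank ℝ
            ↑(LinearMap.range (Lap B).mulVecLin ⊔ LinearMap.range (Lap E).mulVecLin) :=
            Submodule.finrank_mono hle
        _ ≤ (Lap B).rank + (Lap E).rank :=
            Submodule.finrank_add_le_finrank_add_finrank _ _
    omega
end
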